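/- Let β > 0, let V : ℝ → ℝ be continuous and 2π-periodic, and let W : ℝ × ℝ → ℝ be continuous, 2π-periodic in each variable, and symmetric (W(x,y) = W(y,x)). Suppose ρ : ℝ → ℝ is continuous, 2π-periodic, and is a Kirkwood–Monroe fixed point for (V, W, β). Then ρ is a critical point of the free energy F[ρ] := β^{−1} ∫_0^{2π} ρ log ρ dx + ∫_0^{2π} V ρ dx + (1/2) ∫_0^{2π}∫_0^{2π} W(x,y)ρ(x)ρ(y) dx dy, in the sense that for every continuous 2π-periodic σ : ℝ → ℝ with ∫_0^{2π} σ(x) dx = 0, the function ε ↦ F[ρ + εσ] is differentiable at ε = 0 with derivative equal to 0. -/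

import Mathlib

/-!
Differentiating under the integral sign, the first variation of `F` at `ρ` in the direction `σ`
is `∫ (β⁻¹ (log ρ + 1) + V + W ⋆ ρ) σ`: for the entropy, `ρ + εσ` stays bounded away from `0` on
`[0, 2π]` for small `ε` by compactness, and for the interaction energy the symmetry of `W` and
Fubini make the two cross terms equal. Taking the logarithm of the Kirkwood–Monroe equation shows
that `β⁻¹ (log ρ + 1) + V + W ⋆ ρ` is constant, so the first variation is a multiple of `∫ σ = 0`.
-/

open Real MeasureTheory

/-- The convolution with a two-variable kernel: `(W ⋆ ρ)(x) = ∫_0^{2π} W(x,y) ρ(y) dy`. -/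
noncomputable def convW (W : ℝ → ℝ → ℝ) (ρ : ℝ → ℝ) (x : ℝ) : ℝ :=
  ∫ y in (0:ℝ)..(2 * π), W x y * ρ y

/-- The mean-field free energy
`F[ρ] = β⁻¹∫ρ log ρ + ∫Vρ + (1/2)∫∫W(x,y)ρ(x)ρ(y)` on `[0,2π]`. -/
noncomputable def freeEnergy (β : ℝ) (V : ℝ → ℝ) (W : ℝ → ℝ → ℝ) (ρ : ℝ → ℝ) : ℝ :=
  β⁻¹ * (∫ x in (0:ℝ)..(2 * π), ρ x * Real.log (ρ x))
    + (∫ x in (0:ℝ)..(2 * π), V x * ρ x)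
    + (1 / 2) * ∫ x in (0:ℝ)..(2 * π), ∫ y in (0:ℝ)..(2 * π), W x y * ρ x * ρ y

/-- `ρ` is a Kirkwood–Monroe fixed point for `(V, W, β)`:
`ρ(x) = Z⁻¹ exp(−β(V(x) + (W⋆ρ)(x)))` with `Z = ∫_0^{2π} exp(−β(V(y) + (W⋆ρ)(y))) dy`. -/
def IsKMFixedPointW (β : ℝ) (V : ℝ → ℝ) (W : ℝ → ℝ → ℝ) (ρ : ℝ → ℝ) : Prop :=
  ∀ x : ℝ, ρ x =
    (∫ y in (0:ℝ)..(2 * π), Real.exp (-β * (V y + convW W ρ y)))⁻¹ *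
      Real.exp (-β * (V x + convW W ρ x))

open Set Filter Topology Function

theorem hasDerivAt_intervalIntegral_of_continuousOn {E : Type*} [NormedAddCommGroup E]
    [NormedSpace ℝ E] {F F' : ℝ → ℝ → E} {x₀ a b : ℝ} {s : Set ℝ}
    (hs : s ∈ 𝓝 x₀) (hF : ∀ x ∈ s, ContinuousOn (F x) (uIcc a b))
    (hF' : ContinuousOn (uncurry F') (s ×ˢ uIcc a b))
    (hderiv : ∀ x ∈ s, ∀ t ∈ uIcc a b, HasDerivAt (F · t) (F' x t) x) :
    HasDerivAt (fun x => ∫ t in a..b, F x t) (∫ t in a..b, F' x₀ t) x₀ := by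
  obtain ⟨r, hr, hrs⟩ := Metric.nhds_basis_closedBall.mem_iff.1 hs
  obtain ⟨C, hC⟩ := ((isCompact_closedBall x₀ r).prod isCompact_uIcc).exists_bound_of_continuousOn
    (hF'.mono (prod_mono hrs subset_rfl))
  have hx₀ : x₀ ∈ s := mem_of_mem_nhds hs
  refine (intervalIntegral.hasDerivAt_integral_of_dominated_loc_of_deriv_le (bound := fun _ => C)
    (Metric.closedBall_mem_nhds x₀ hr) ?_ (hF x₀ hx₀).intervalIntegrable ?_ ?_
    intervalIntegrable_const ?_).2
  · filter_upwards [hs] with x hx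
    exact ((hF x hx).mono uIoc_subset_uIcc).aestronglyMeasurable measurableSet_uIoc
  · refine ContinuousOn.aestronglyMeasurable ?_ measurableSet_uIoc
    exact hF'.comp (continuousOn_const.prodMk continuousOn_id)
      (fun t ht => ⟨hx₀, uIoc_subset_uIcc ht⟩)
  · exact ae_of_all _ fun t ht x hx => hC (x, t) ⟨hx, uIoc_subset_uIcc ht⟩
  · exact ae_of_all _ fun t ht x hx => hderiv x (hrs hx) t (uIoc_subset_uIcc ht)

theorem hasDerivAt_integral_mul_log_add_mul {ρ σ : ℝ → ℝ} {a b : ℝ}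
    (hρ : Continuous ρ) (hσ : Continuous σ) (hρpos : ∀ t ∈ uIcc a b, 0 < ρ t) :
    HasDerivAt (fun ε => ∫ t in a..b, (ρ t + ε * σ t) * Real.log (ρ t + ε * σ t))
      (∫ t in a..b, (Real.log (ρ t) + 1) * σ t) 0 := by
  set s := {ε : ℝ | ∀ t ∈ uIcc a b, 0 < ρ t + ε * σ t}
  have hs : s ∈ 𝓝 0 := by
    refine isCompact_uIcc.eventually_forall_of_forall_eventually fun t ht => ?_
    have hcont : Continuous fun p : ℝ × ℝ => ρ p.2 + p.1 * σ p.2 := by fun_prop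
    exact continuousAt_const.eventually_lt hcont.continuousAt (by simpa using hρpos t ht)
  have hne : ∀ ε ∈ s, ∀ t ∈ uIcc a b, ρ t + ε * σ t ≠ 0 := fun ε hε t ht => (hε t ht).ne'
  simpa using hasDerivAt_intervalIntegral_of_continuousOn hs
    (F := fun ε t => (ρ t + ε * σ t) * Real.log (ρ t + ε * σ t))
    (F' := fun ε t => (Real.log (ρ t + ε * σ t) + 1) * σ t)
    (fun ε hε => by
      have : ContinuousOn (fun t => ρ t + ε * σ t) (uIcc a b) := by fun_prop
      exact this.mul (this.log (hne ε hε)))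
    (by
      have : ContinuousOn (fun p : ℝ × ℝ => ρ p.2 + p.1 * σ p.2) (s ×ˢ uIcc a b) := by fun_prop
      exact ((this.log fun p hp => hne p.1 hp.1 p.2 hp.2).add continuousOn_const).mul
        (hσ.comp continuous_snd).continuousOn)
    (fun ε hε t ht => by
      simpa [comp_def] using (Real.hasDerivAt_mul_log (hne ε hε t ht)).comp ε
        ((hasDerivAt_mul_const (σ t)).const_add (ρ t)))

theorem hasDerivAt_integral_integral_mul_add_mul {W : ℝ → ℝ → ℝ} {ρ σ : ℝ → ℝ} {a b : ℝ}
    (hW : Continuous fun p : ℝ × ℝ => W p.1 p.2) (hρ : Continuous ρ) (hσ : Continuous σ) :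
    HasDerivAt
      (fun ε => ∫ x in a..b, ∫ y in a..b, W x y * (ρ x + ε * σ x) * (ρ y + ε * σ y))
      (∫ x in a..b, ∫ y in a..b, W x y * (σ x * ρ y + ρ x * σ y)) 0 := by
  have hinner : ∀ ε x, HasDerivAt
      (fun ε => ∫ y in a..b, W x y * (ρ x + ε * σ x) * (ρ y + ε * σ y))
      (∫ y in a..b, W x y * (σ x * (ρ y + ε * σ y) + (ρ x + ε * σ x) * σ y)) ε := by
    intro ε x
    refine hasDerivAt_intervalIntegral_of_continuousOn univ_mem
      (F := fun ε y => W x y * (ρ x + ε * σ x) * (ρ y + ε * σ y))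
      (F' := fun ε y => W x y * (σ x * (ρ y + ε * σ y) + (ρ x + ε * σ x) * σ y))
      (fun _ _ => Continuous.continuousOn (by fun_prop)) (Continuous.continuousOn (by fun_prop))
      (fun ε _ y _ => ?_)
    simpa only [mul_assoc, Pi.mul_apply] using
      (((hasDerivAt_mul_const _).const_add _).mul
        ((hasDerivAt_mul_const _).const_add _)).const_mul (W x y)
  simpa using hasDerivAt_intervalIntegral_of_continuousOn univ_mem (x₀ := 0) (a := a) (b := b)
    (F' := fun ε x => ∫ y in a..b, W x y * (σ x * (ρ y + ε * σ y) + (ρ x + ε * σ x) * σ y))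
    (fun _ _ => Continuous.continuousOn (by fun_prop)) (Continuous.continuousOn (by fun_prop))
    (fun ε _ x _ => hinner ε x)

theorem intervalIntegral_swap_of_continuous {F : ℝ → ℝ → ℝ} (hF : Continuous (uncurry F))
    (a b c d : ℝ) :
    ∫ x in a..b, ∫ y in c..d, F x y = ∫ y in c..d, ∫ x in a..b, F x y :=
  intervalIntegral_intervalIntegral_swap <|
    (hF.continuousOn.integrableOn_compact (isCompact_uIcc.prod isCompact_uIcc)).mono_set
      (prod_mono uIoc_subset_uIcc uIoc_subset_uIcc)

theorem integral_integral_mul_add_mul_of_symm {W : ℝ → ℝ → ℝ} {ρ σ : ℝ → ℝ} {a b : ℝ}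
    (hW : Continuous fun p : ℝ × ℝ => W p.1 p.2) (hWsym : ∀ x y, W x y = W y x)
    (hρ : Continuous ρ) (hσ : Continuous σ) :
    ∫ x in a..b, ∫ y in a..b, W x y * (σ x * ρ y + ρ x * σ y)
      = 2 * ∫ x in a..b, σ x * ∫ y in a..b, W x y * ρ y := by
  have hswap : ∫ x in a..b, ∫ y in a..b, W x y * (ρ x * σ y)
      = ∫ x in a..b, ∫ y in a..b, W x y * (σ x * ρ y) := by
    rw [intervalIntegral_swap_of_continuous (F := fun x y => W x y * (ρ x * σ y))
      (by fun_prop)]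
    refine intervalIntegral.integral_congr fun x _ => intervalIntegral.integral_congr fun y _ => ?_
    simp only [hWsym y x]
    ring
  have hsplit : ∫ x in a..b, ∫ y in a..b, W x y * (σ x * ρ y + ρ x * σ y)
      = (∫ x in a..b, ∫ y in a..b, W x y * (σ x * ρ y))
        + ∫ x in a..b, ∫ y in a..b, W x y * (ρ x * σ y) := by
    rw [← intervalIntegral.integral_add (Continuous.intervalIntegrable (by fun_prop) _ _)
      (Continuous.intervalIntegrable (by fun_prop) _ _)]
    refine intervalIntegral.integral_congr fun x _ => ?_
    simp only [mul_add]
    exact intervalIntegral.integral_add (Continuous.intervalIntegrable (by fun_prop) _ _)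
      (Continuous.intervalIntegrable (by fun_prop) _ _)
  have hpull : ∫ x in a..b, ∫ y in a..b, W x y * (σ x * ρ y)
      = ∫ x in a..b, σ x * ∫ y in a..b, W x y * ρ y := by
    refine intervalIntegral.integral_congr fun x _ => ?_
    simp only [← intervalIntegral.integral_const_mul]
    exact intervalIntegral.integral_congr fun y _ => by ring
  rw [hsplit, hswap, hpull]
  ring

theorem continuous_convW {W : ℝ → ℝ → ℝ} {ρ : ℝ → ℝ}
    (hW : Continuous fun p : ℝ × ℝ => W p.1 p.2) (hρ : Continuous ρ) : Continuous (convW W ρ) := by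
  unfold convW
  fun_prop

theorem integral_exp_neg_mul_add_convW_pos (β : ℝ) {V : ℝ → ℝ} {W : ℝ → ℝ → ℝ} {ρ : ℝ → ℝ}
    (hV : Continuous V) (hW : Continuous fun p : ℝ × ℝ => W p.1 p.2) (hρ : Continuous ρ) :
    0 < ∫ y in (0:ℝ)..(2 * π), Real.exp (-β * (V y + convW W ρ y)) :=
  intervalIntegral.intervalIntegral_pos_of_pos
    ((continuous_const.mul (hV.add (continuous_convW hW hρ))).rexp.intervalIntegrable _ _)
    (fun _ => Real.exp_pos _) Real.two_pi_pos

namespace IsKMFixedPointW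

variable {β : ℝ} {V : ℝ → ℝ} {W : ℝ → ℝ → ℝ} {ρ : ℝ → ℝ}

theorem pos (hKM : IsKMFixedPointW β V W ρ) (hV : Continuous V)
    (hW : Continuous fun p : ℝ × ℝ => W p.1 p.2) (hρ : Continuous ρ) (x : ℝ) : 0 < ρ x := by
  rw [hKM x]
  exact mul_pos (inv_pos.2 (integral_exp_neg_mul_add_convW_pos β hV hW hρ)) (Real.exp_pos _)

theorem exists_inv_mul_log_add_one_add_eq (hKM : IsKMFixedPointW β V W ρ) (hβ : β ≠ 0)
    (hV : Continuous V) (hW : Continuous fun p : ℝ × ℝ => W p.1 p.2) (hρ : Continuous ρ) :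
    ∃ c, ∀ x, β⁻¹ * (Real.log (ρ x) + 1) + V x + convW W ρ x = c := by
  have hZ := integral_exp_neg_mul_add_convW_pos β hV hW hρ
  refine ⟨β⁻¹ * (1 - Real.log (∫ y in (0:ℝ)..(2 * π), Real.exp (-β * (V y + convW W ρ y)))),
    fun x => ?_⟩
  rw [hKM x, Real.log_mul (inv_ne_zero hZ.ne') (Real.exp_ne_zero _), Real.log_inv, Real.log_exp]
  field_simp
  ring

end IsKMFixedPointW

theorem stmt4_general (β : ℝ) (hβ : 0 < β)
    (V : ℝ → ℝ) (hV : Continuous V)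
    (W : ℝ → ℝ → ℝ) (hW : Continuous fun p : ℝ × ℝ => W p.1 p.2)
    (hWsym : ∀ x y : ℝ, W x y = W y x)
    (ρ : ℝ → ℝ) (hρ : Continuous ρ)
    (hKM : IsKMFixedPointW β V W ρ) :
    ∀ σ : ℝ → ℝ, Continuous σ → Function.Periodic σ (2 * π) →
      (∫ x in (0:ℝ)..(2 * π), σ x) = 0 →
      HasDerivAt (fun ε : ℝ => freeEnergy β V W (fun x => ρ x + ε * σ x)) 0 0 := by
  intro σ hσ _ hσ0
  have hρpos := hKM.pos hV hW hρ
  have hlogρ : Continuous fun x => Real.log (ρ x) := hρ.log fun x => (hρpos x).ne'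
  obtain ⟨c, hc⟩ := hKM.exists_inv_mul_log_add_one_add_eq hβ.ne' hV hW hρ
  have hentropy := hasDerivAt_integral_mul_log_add_mul (a := 0) (b := 2 * π) hρ hσ
    fun t _ => hρpos t
  have hpotential : HasDerivAt (fun ε => ∫ x in (0:ℝ)..(2 * π), V x * (ρ x + ε * σ x))
      (∫ x in (0:ℝ)..(2 * π), V x * σ x) 0 :=
    hasDerivAt_intervalIntegral_of_continuousOn univ_mem (fun _ _ => by fun_prop) (by fun_prop)
      fun ε _ x _ => ((hasDerivAt_mul_const (σ x)).const_add (ρ x)).const_mul (V x)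
  have hinteraction := hasDerivAt_integral_integral_mul_add_mul (a := 0) (b := 2 * π) hW hρ hσ
  have hvalue : β⁻¹ * (∫ x in (0:ℝ)..(2 * π), (Real.log (ρ x) + 1) * σ x)
      + (∫ x in (0:ℝ)..(2 * π), V x * σ x)
      + 1 / 2 * ∫ x in (0:ℝ)..(2 * π), ∫ y in (0:ℝ)..(2 * π), W x y * (σ x * ρ y + ρ x * σ y)
      = 0 := by
    have hconvρ := continuous_convW hW hρ
    rw [integral_integral_mul_add_mul_of_symm hW hWsym hρ hσ, ← mul_assoc,
      one_div_mul_cancel two_ne_zero, one_mul, ← intervalIntegral.integral_const_mul,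
      ← intervalIntegral.integral_add (Continuous.intervalIntegrable (by fun_prop) _ _)
        (Continuous.intervalIntegrable (by fun_prop) _ _),
      ← intervalIntegral.integral_add (Continuous.intervalIntegrable (by fun_prop) _ _)
        (Continuous.intervalIntegrable (by fun_prop) _ _)]
    calc _ = ∫ x in (0:ℝ)..(2 * π), c * σ x :=
          intervalIntegral.integral_congr fun x _ => by rw [← hc x, convW]; ring
      _ = 0 := by rw [intervalIntegral.integral_const_mul, hσ0, mul_zero]
  have hderiv := ((hentropy.const_mul β⁻¹).add hpotential).add (hinteraction.const_mul (1 / 2))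
  rwa [hvalue] at hderiv

/-- A continuous `2π`-periodic Kirkwood–Monroe fixed point is a critical
point of the free energy: for every continuous `2π`-periodic mean-zero direction `σ`,
`ε ↦ F[ρ + εσ]` is differentiable at `ε = 0` with derivative `0`. -/
theorem stmt4 (β : ℝ) (hβ : 0 < β)
    (V : ℝ → ℝ) (hV : Continuous V) (hVper : Function.Periodic V (2 * π))
    (W : ℝ → ℝ → ℝ) (hW : Continuous fun p : ℝ × ℝ => W p.1 p.2)
    (hWper1 : ∀ x y : ℝ, W (x + 2 * π) y = W x y)
    (hWper2 : ∀ x y : ℝ, W x (y + 2 * π) = W x y)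
    (hWsym : ∀ x y : ℝ, W x y = W y x)
    (ρ : ℝ → ℝ) (hρ : Continuous ρ) (hρper : Function.Periodic ρ (2 * π))
    (hKM : IsKMFixedPointW β V W ρ) :
    ∀ σ : ℝ → ℝ, Continuous σ → Function.Periodic σ (2 * π) →
      (∫ x in (0:ℝ)..(2 * π), σ x) = 0 →
      HasDerivAt (fun ε : ℝ => freeEnergy β V W (fun x => ρ x + ε * σ x)) 0 0 :=
  stmt4_general β hβ V hV W hW hWsym ρ hρ hKM
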